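/- arXiv:2505.00792 — 2 statements merged into one kernel-verified Lean document; each statement's English description precedes it below -/
import Mathlib

section
/- Let N, E ≥ 1, let a : Fin N → ℝ have a unique maximizer j*, and for each j let r j : Fin E → ℝ be a probability vector. Fix an index i and assume H(r j) ≤ H(r i) for every j. For τ > 0 define the mixture p_τ e = Σ_j σ_τ(j) · r j e, where σ_τ(j) = exp(a j / τ) / Σ_k exp(a k / τ). Then H(p_τ) converges to H(r j*) as τ → 0⁺, and in particular lim_{τ→0⁺} H(p_τ) ≤ H(r i). -/
open Finset Real Filter

/-- Shannon entropy of a finitely supported vector, with the convention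
`0 * log 0 = 0` (which holds since `Real.log 0 = 0`). -/
noncomputable def shannonEntropy {α : Type*} [Fintype α] (q : α → ℝ) : ℝ :=
  -∑ a, q a * Real.log (q a)

open Topology

/-!
As `τ → 0⁺` the softmax weights concentrate on the unique maximizer `jstar`: after shifting
all scores by `a jstar`, which leaves the softmax unchanged, every other weight is `exp` of
something tending to `-∞`. The mixture depends continuously on the weights and so does the
entropy (`x ↦ x log x` is continuous), hence the entropy of the mixture tends to that of `r jstar`.
-/

theorem continuous_shannonEntropy {α : Type*} [Fintype α] :
    Continuous (shannonEntropy : (α → ℝ) → ℝ) := by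
  unfold shannonEntropy
  exact (continuous_finsetSum _ fun a _ => continuous_mul_log.comp (continuous_apply a)).neg

section Softmax

variable {ι : Type*}

theorem exp_div_sum_exp_div_eq_sub [Fintype ι] (a : ι → ℝ) (c τ : ℝ) (j : ι) :
    exp (a j / τ) / ∑ k, exp (a k / τ) = exp ((a j - c) / τ) / ∑ k, exp ((a k - c) / τ) := by
  have hshift : ∀ x, exp ((x - c) / τ) = exp (x / τ) * exp (-(c / τ)) := fun x => by
    rw [← exp_add, sub_div, sub_eq_add_neg]
  simp only [hshift, ← Finset.sum_mul]
  rw [mul_div_mul_right _ _ (exp_ne_zero _)]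

theorem tendsto_exp_sub_div_nhdsGT_zero [DecidableEq ι] {a : ι → ℝ} {m : ι}
    (hmax : ∀ j, j ≠ m → a j < a m) (j : ι) :
    Tendsto (fun τ => exp ((a j - a m) / τ)) (𝓝[>] 0) (𝓝 ((Pi.single m 1 : ι → ℝ) j)) := by
  by_cases hj : j = m
  · subst hj
    simp
  · rw [Pi.single_eq_of_ne hj]
    have hneg : a j - a m < 0 := sub_neg.mpr (hmax j hj)
    have hbot : Tendsto (fun τ => (a j - a m) / τ) (𝓝[>] 0) atBot := by
      simp only [div_eq_mul_inv]
      exact (tendsto_const_mul_atBot_of_neg hneg).mpr tendsto_inv_nhdsGT_zero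
    exact tendsto_exp_atBot.comp hbot

theorem tendsto_softmax_nhdsGT_zero [Fintype ι] [DecidableEq ι] {a : ι → ℝ} {m : ι}
    (hmax : ∀ j, j ≠ m → a j < a m) :
    Tendsto (fun τ j => exp (a j / τ) / ∑ k, exp (a k / τ)) (𝓝[>] 0) (𝓝 (Pi.single m (1 : ℝ))) := by
  have hsum : Tendsto (fun τ => ∑ k, exp ((a k - a m) / τ)) (𝓝[>] 0) (𝓝 1) := by
    simpa using tendsto_finsetSum univ fun k _ => tendsto_exp_sub_div_nhdsGT_zero hmax k
  refine tendsto_pi_nhds.mpr fun j => ?_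
  simp only [exp_div_sum_exp_div_eq_sub a (a m)]
  simpa [Pi.div_def] using (tendsto_exp_sub_div_nhdsGT_zero hmax j).div hsum one_ne_zero

end Softmax

theorem entropy_softmax_mixture_tendsto_general {N E : ℕ}
    (a : Fin N → ℝ) (jstar : Fin N) (hmax : ∀ j, j ≠ jstar → a j < a jstar)
    (r : Fin N → Fin E → ℝ)
    (i : Fin N) (hent : ∀ j, shannonEntropy (r j) ≤ shannonEntropy (r i)) :
    Tendsto
      (fun τ : ℝ =>
        shannonEntropy (fun e : Fin E =>
          ∑ j, (Real.exp (a j / τ) / ∑ k, Real.exp (a k / τ)) * r j e))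
      (nhdsWithin 0 (Set.Ioi 0)) (nhds (shannonEntropy (r jstar))) ∧
    shannonEntropy (r jstar) ≤ shannonEntropy (r i) := by
  refine ⟨?_, hent jstar⟩
  have hmix : Continuous fun (w : Fin N → ℝ) (e : Fin E) => ∑ j, w j * r j e := by fun_prop
  have hpoint : (fun e => ∑ j, (Pi.single jstar 1 : Fin N → ℝ) j * r j e) = r jstar := by
    ext e
    simp [Pi.single_apply]
  have hlim := ((continuous_shannonEntropy.comp hmix).tendsto (Pi.single jstar 1)).comp
    (tendsto_softmax_nhdsGT_zero hmax)
  rwa [Function.comp_apply, hpoint] at hlim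

/-- As the temperature `τ → 0⁺`, the entropy of the softmax-weighted mixture
`p_τ e = ∑ j, σ_τ(j) * r j e` converges to `H (r jstar)`; in particular, since
`H (r j) ≤ H (r i)` for all `j`, the limit is at most `H (r i)`. -/
theorem entropy_softmax_mixture_tendsto {N E : ℕ} (hN : 1 ≤ N) (hE : 1 ≤ E)
    (a : Fin N → ℝ) (jstar : Fin N) (hmax : ∀ j, j ≠ jstar → a j < a jstar)
    (r : Fin N → Fin E → ℝ) (hr0 : ∀ j e, 0 ≤ r j e) (hr1 : ∀ j, ∑ e, r j e = 1)
    (i : Fin N) (hent : ∀ j, shannonEntropy (r j) ≤ shannonEntropy (r i)) :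
    Tendsto
      (fun τ : ℝ =>
        shannonEntropy (fun e : Fin E =>
          ∑ j, (Real.exp (a j / τ) / ∑ k, Real.exp (a k / τ)) * r j e))
      (nhdsWithin 0 (Set.Ioi 0)) (nhds (shannonEntropy (r jstar))) ∧
    shannonEntropy (r jstar) ≤ shannonEntropy (r i) :=
  entropy_softmax_mixture_tendsto_general a jstar hmax r i hent
end

section
/- Let N, E ≥ 1, D ≥ 1, u ∈ ℝ^D, m : Fin N → ℝ^D, w : Fin N → ℝ with w j > 0, and suppose there is a unique j* with ‖u − m j*‖ < ‖u − m j‖ for all j ≠ j*. For each j let r j : Fin E → ℝ be a probability vector, fix an index i, and assume H(r j) ≤ H(r i) for every j. For σ > 0 set q_σ(j) = w j · exp(−‖u − m j‖² / (2σ²)) / Σ_k w k · exp(−‖u − m k‖² / (2σ²)) and p_σ e = Σ_j q_σ(j) · r j e. Then H(p_σ) converges to H(r j*) as σ → 0⁺, and in particular lim_{σ→0⁺} H(p_σ) ≤ H(r i). -/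
/-!
The posterior weights are a softmax at temperature `2σ²` of the negated squared distances
`‖u - m j‖²`. Shifting every energy by the minimal one leaves the weights unchanged, and after
the shift each term other than `jstar` decays like `exp (-c / t)` with `c > 0`, so the weights
converge to the point mass at `jstar`. The mixture depends linearly, and the entropy
continuously, on the weights, so the entropy of the mixture tends to `H (r jstar)`.
-/

open Finset Real Filter

open Topology

section

variable {ι : Type*} [Fintype ι]

theorem continuous_shannonEntropy_s9 : Continuous (shannonEntropy : (ι → ℝ) → ℝ) :=
  (continuous_finsetSum _ fun a _ => continuous_mul_log.comp (continuous_apply a)).neg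

theorem tendsto_exp_neg_div_nhdsGT_zero {c : ℝ} (hc : 0 < c) :
    Tendsto (fun t : ℝ => exp (-c / t)) (𝓝[>] 0) (𝓝 0) := by
  simpa only [Function.comp_def, div_eq_mul_inv] using
    tendsto_exp_atBot.comp (tendsto_inv_nhdsGT_zero.const_mul_atTop_of_neg (neg_lt_zero.2 hc))

/-- With `d j = ‖u - m j‖²` and `t = 2σ²` these are the Gaussian posterior scores `q_σ`. -/
noncomputable def gibbsWeights (w d : ι → ℝ) (t : ℝ) (j : ι) : ℝ :=
  w j * exp (-d j / t) / ∑ k, w k * exp (-d k / t)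

theorem gibbsWeights_sub_const (w d : ι → ℝ) (c : ℝ) :
    gibbsWeights w (fun k => d k - c) = gibbsWeights w d := by
  funext t j
  have hfactor : ∀ k, w k * exp (-(d k - c) / t) = w k * exp (-d k / t) * exp (c / t) := by
    intro k
    rw [mul_assoc, ← exp_add]
    ring_nf
  simp only [gibbsWeights, hfactor, ← Finset.sum_mul]
  exact mul_div_mul_right _ _ (exp_ne_zero _)

theorem tendsto_gibbsWeights_nhdsGT_zero [DecidableEq ι] {w d : ι → ℝ} {j₀ : ι}
    (hw : w j₀ ≠ 0) (hd : ∀ j, j ≠ j₀ → d j₀ < d j) :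
    Tendsto (gibbsWeights w d) (𝓝[>] 0) (𝓝 (Pi.single j₀ 1)) := by
  have hterm : ∀ k, Tendsto (fun t => w k * exp (-(d k - d j₀) / t)) (𝓝[>] 0)
      (𝓝 ((Pi.single j₀ (w j₀) : ι → ℝ) k)) := by
    intro k
    rcases eq_or_ne k j₀ with rfl | hk
    · simp
    · simpa [hk] using (tendsto_exp_neg_div_nhdsGT_zero (sub_pos.2 (hd k hk))).const_mul (w k)
  have hsum :
      Tendsto (fun t => ∑ k, w k * exp (-(d k - d j₀) / t)) (𝓝[>] 0) (𝓝 (w j₀)) := by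
    simpa using tendsto_finsetSum univ fun k _ => hterm k
  rw [← gibbsWeights_sub_const w d (d j₀), tendsto_pi_nhds]
  intro j
  have hlimit :
      (Pi.single j₀ (w j₀) : ι → ℝ) j / w j₀ = (Pi.single j₀ 1 : ι → ℝ) j := by
    rcases eq_or_ne j j₀ with rfl | hj
    · simp [hw]
    · simp [hj]
  rw [← hlimit]
  exact (hterm j).div hsum hw

end

theorem entropy_gaussianPosterior_mixture_tendsto_general {N E D : ℕ}
    (u : EuclideanSpace ℝ (Fin D)) (m : Fin N → EuclideanSpace ℝ (Fin D))
    (w : Fin N → ℝ) (hw : ∀ j, 0 < w j) (jstar : Fin N)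
    (hmin : ∀ j, j ≠ jstar → ‖u - m jstar‖ < ‖u - m j‖)
    (r : Fin N → Fin E → ℝ)
    (i : Fin N) (hent : ∀ j, shannonEntropy (r j) ≤ shannonEntropy (r i)) :
    Tendsto
      (fun σ : ℝ =>
        shannonEntropy (fun e : Fin E =>
          ∑ j, (w j * Real.exp (-‖u - m j‖ ^ 2 / (2 * σ ^ 2)) /
              ∑ k, w k * Real.exp (-‖u - m k‖ ^ 2 / (2 * σ ^ 2))) * r j e))
      (nhdsWithin 0 (Set.Ioi 0)) (nhds (shannonEntropy (r jstar))) ∧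
    shannonEntropy (r jstar) ≤ shannonEntropy (r i) := by
  refine ⟨?_, hent jstar⟩
  have hposterior : Tendsto (gibbsWeights w fun j => ‖u - m j‖ ^ 2) (𝓝[>] 0)
      (𝓝 (Pi.single jstar 1)) :=
    tendsto_gibbsWeights_nhdsGT_zero (hw jstar).ne'
      fun j hj => pow_lt_pow_left₀ (hmin j hj) (norm_nonneg _) two_ne_zero
  have hvariance : Tendsto (fun σ : ℝ => 2 * σ ^ 2) (𝓝[>] 0) (𝓝[>] 0) :=
    tendsto_nhdsWithin_of_tendsto_nhds_of_eventually_within _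
      (((by fun_prop : Continuous fun σ : ℝ => 2 * σ ^ 2).tendsto' 0 0 (by simp)).mono_left
        nhdsWithin_le_nhds)
      (eventually_nhdsWithin_of_forall fun σ (hσ : 0 < σ) => Set.mem_Ioi.2 (by positivity))
  have hmixture : Tendsto
      (fun σ : ℝ => Matrix.vecMul (gibbsWeights w (fun j => ‖u - m j‖ ^ 2) (2 * σ ^ 2)) r)
      (𝓝[>] 0) (𝓝 (r jstar)) :=
    ((continuous_id.matrix_vecMul (continuous_const (y := r))).tendsto' _ _
      (Matrix.single_one_vecMul jstar r)).comp (hposterior.comp hvariance)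
  exact (continuous_shannonEntropy_s9.tendsto _).comp hmixture

/-- As `σ → 0⁺`, the entropy of the Gaussian-posterior-weighted mixture
`p_σ e = ∑ j, q_σ(j) * r j e` converges to `H (r jstar)`; in particular, since
`H (r j) ≤ H (r i)` for all `j`, the limit is at most `H (r i)`. -/
theorem entropy_gaussianPosterior_mixture_tendsto {N E D : ℕ}
    (hN : 1 ≤ N) (hE : 1 ≤ E) (hD : 1 ≤ D)
    (u : EuclideanSpace ℝ (Fin D)) (m : Fin N → EuclideanSpace ℝ (Fin D))
    (w : Fin N → ℝ) (hw : ∀ j, 0 < w j) (jstar : Fin N)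
    (hmin : ∀ j, j ≠ jstar → ‖u - m jstar‖ < ‖u - m j‖)
    (r : Fin N → Fin E → ℝ) (hr0 : ∀ j e, 0 ≤ r j e) (hr1 : ∀ j, ∑ e, r j e = 1)
    (i : Fin N) (hent : ∀ j, shannonEntropy (r j) ≤ shannonEntropy (r i)) :
    Tendsto
      (fun σ : ℝ =>
        shannonEntropy (fun e : Fin E =>
          ∑ j, (w j * Real.exp (-‖u - m j‖ ^ 2 / (2 * σ ^ 2)) /
              ∑ k, w k * Real.exp (-‖u - m k‖ ^ 2 / (2 * σ ^ 2))) * r j e))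
      (nhdsWithin 0 (Set.Ioi 0)) (nhds (shannonEntropy (r jstar))) ∧
    shannonEntropy (r jstar) ≤ shannonEntropy (r i) :=
  entropy_gaussianPosterior_mixture_tendsto_general u m w hw jstar hmin r i hent
end
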